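/- Let Θ be a strictly positive self-adjoint operator in the Hilbert space h with associated sesquilinear form f, and let Π : h → h be an orthogonal projector such that dom(f) ∩ ran(Π) is dense in ran(Π). Then the strictly positive self-adjoint operator Θ_Π in ran(Π) associated with the restriction f_Π of f to (dom(f) ∩ ran(Π)) × (dom(f) ∩ ran(Π)) is given by dom(Θ_Π) = {φ ∈ dom(f) ∩ ran(Π) : there exists φ̃ ∈ ran(Π) such that Θ̆φ − φ̃ ∈ 𝔨_Π}, Θ_Πφ := φ̃. Moreover the compression C_Π(Θ) (with domain dom(Θ) ∩ ran(Π), C_Π(Θ)φ := ΠΘφ) is self-adjoint — equivalently C_Π(Θ) = Θ_Π — if and only if dom(Θ_Π) ⊆ dom(Θ). -/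

import Mathlib

/-!
STATEMENT 19 (Appendix, Lemma `lemma-compr`: compressions of self-adjoint
operators / restrictions of sesquilinear forms).

`Θ` is a strictly positive self-adjoint operator in the Hilbert space `h` with
associated closed, strictly positive sesquilinear form `f`.  The form domain
`h_Θ = dom f` (with scalar product `f`) is modelled as a Hilbert space `F`
together with a continuous, injective, densely-ranged embedding `j : F → h`;
thus `f(φ₁, φ₂) = ⟪φ₁, φ₂⟫_F` and `Θ` is the operator associated with `f`:
`dom Θ = {j φ : ∃ w, ∀ ψ, ⟪φ, ψ⟫_F = ⟪w, j ψ⟫_h}`, `Θ (j φ) = w`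
(equivalently `Θ = Θ̆ | {φ ∈ h_Θ : Θ̆ φ ∈ h}`).

`Π` is an orthogonal projector with `dom f ∩ ran Π` dense in `ran Π`.  The
condition `Θ̆ φ - φ̃ ∈ 𝔨_Π` (the annihilator of `h_Θ ∩ ran Π` in `h_Θ'`) is
expressed equivalently as `∀ ψ ∈ h_Θ ∩ ran Π, ⟪φ, ψ⟫_F = ⟪φ̃, j ψ⟫_h`.

Claim: the self-adjoint operator `Θ_Π` in `ran Π` associated with the
restriction `f_Π` of `f` is given by
`dom Θ_Π = {φ ∈ dom f ∩ ran Π : ∃ φ̃ ∈ ran Π, Θ̆ φ - φ̃ ∈ 𝔨_Π}`, `Θ_Π φ = φ̃`;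
and the compression `C_Π(Θ)` (domain `dom Θ ∩ ran Π`, `φ ↦ Π Θ φ`) is
self-adjoint — equivalently `C_Π(Θ) = Θ_Π` — iff `dom Θ_Π ⊆ dom Θ`.
-/

open scoped InnerProductSpace

section
variable {h : Type*} [NormedAddCommGroup h] [InnerProductSpace ℂ h] [CompleteSpace h]

/-- Self-adjointness of an operator acting in the subspace `K` of `h`. -/
def IsSelfAdjointIn (K : Submodule ℂ h) (Θ : h →ₗ.[ℂ] h) : Prop :=
  Θ.domain ≤ K ∧ (∀ φ : Θ.domain, Θ φ ∈ K) ∧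
  (∀ x ∈ K, x ∈ closure (Θ.domain : Set h)) ∧
  (∀ φ ψ : Θ.domain, ⟪Θ φ, (ψ : h)⟫_ℂ = ⟪(φ : h), Θ ψ⟫_ℂ) ∧
  (∀ ψ ∈ K, ∀ w ∈ K, (∀ φ : Θ.domain, ⟪ψ, Θ φ⟫_ℂ = ⟪w, (φ : h)⟫_ℂ) →
      ∃ hψ : ψ ∈ Θ.domain, Θ ⟨ψ, hψ⟩ = w)

/-- The compression `C_Π(Θ)` of `Θ` to `ran Π`: domain `dom Θ ∩ ran Π`,
`C_Π(Θ) φ := Π Θ Π φ = Π Θ φ`. -/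
noncomputable def compression (P : h →L[ℂ] h) (Θ : h →ₗ.[ℂ] h) : h →ₗ.[ℂ] h :=
  ⟨Θ.domain ⊓ LinearMap.range (P : h →ₗ[ℂ] h),
    (P.toLinearMap.comp Θ.toFun).comp (Submodule.inclusion inf_le_left)⟩

theorem statement_19
    {F : Type*} [NormedAddCommGroup F] [InnerProductSpace ℂ F] [CompleteSpace F]
    -- the form domain `h_Θ`, embedded in `h`
    (j : F →L[ℂ] h) (hjinj : Function.Injective j) (hjdense : DenseRange j)
    -- strict positivity of the form `f`
    (c : ℝ) (hc : 0 < c) (hpos : ∀ φ : F, c * ‖j φ‖ ^ 2 ≤ ‖φ‖ ^ 2)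
    -- `Θ`: the strictly positive self-adjoint operator associated with `f`
    (Θ : h →ₗ.[ℂ] h)
    (hΘdom : ∀ x : h, x ∈ Θ.domain ↔
      ∃ φ : F, j φ = x ∧ ∃ w : h, ∀ ψ : F, ⟪φ, ψ⟫_ℂ = ⟪w, j ψ⟫_ℂ)
    (hΘval : ∀ (u : Θ.domain) (φ : F), j φ = (u : h) →
      ∀ ψ : F, ⟪φ, ψ⟫_ℂ = ⟪Θ u, j ψ⟫_ℂ)
    -- the orthogonal projector `Π`, with `dom f ∩ ran Π` dense in `ran Π`
    (P : h →L[ℂ] h) (hPidem : IsIdempotentElem P)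
    (hPsym : ∀ x y : h, ⟪P x, y⟫_ℂ = ⟪x, P y⟫_ℂ)
    (hdense : ∀ x ∈ LinearMap.range (P : h →ₗ[ℂ] h),
      x ∈ closure (j '' {φ : F | j φ ∈ LinearMap.range (P : h →ₗ[ℂ] h)}))
    -- `Θ_Π`: the self-adjoint operator in `ran Π` associated with `f_Π`
    (ThP : h →ₗ.[ℂ] h)
    (hThPsa : IsSelfAdjointIn (LinearMap.range (P : h →ₗ[ℂ] h)) ThP)
    (hThPform : ∀ u : ThP.domain, ∃ φ : F, j φ = (u : h) ∧ j φ ∈ LinearMap.range (P : h →ₗ[ℂ] h) ∧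
      ∀ ψ : F, j ψ ∈ LinearMap.range (P : h →ₗ[ℂ] h) → ⟪φ, ψ⟫_ℂ = ⟪ThP u, j ψ⟫_ℂ) :
    -- description of `dom Θ_Π` and of `Θ_Π`
    (∀ x : h, x ∈ ThP.domain ↔
      (x ∈ LinearMap.range (P : h →ₗ[ℂ] h) ∧ ∃ φ : F, j φ = x ∧
        ∃ w ∈ LinearMap.range (P : h →ₗ[ℂ] h), ∀ ψ : F, j ψ ∈ LinearMap.range (P : h →ₗ[ℂ] h) →
          ⟪φ, ψ⟫_ℂ = ⟪w, j ψ⟫_ℂ)) ∧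
    (∀ (u : ThP.domain) (φ : F) (w : h), j φ = (u : h) → w ∈ LinearMap.range (P : h →ₗ[ℂ] h) →
      (∀ ψ : F, j ψ ∈ LinearMap.range (P : h →ₗ[ℂ] h) → ⟪φ, ψ⟫_ℂ = ⟪w, j ψ⟫_ℂ) → ThP u = w) ∧
    -- the compression criterion
    (IsSelfAdjointIn (LinearMap.range (P : h →ₗ[ℂ] h)) (compression P Θ) ↔
      ∀ x ∈ ThP.domain, x ∈ Θ.domain) ∧
    (IsSelfAdjointIn (LinearMap.range (P : h →ₗ[ℂ] h)) (compression P Θ) ↔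
      compression P Θ = ThP) := by
  classical
  have hPP : ∀ x : h, P (P x) = P x := fun x => by
    have := congrArg (fun T : h →L[ℂ] h => T x) hPidem
    simpa [ContinuousLinearMap.mul_apply] using this
  set K := LinearMap.range (P : h →ₗ[ℂ] h) with hKdef
  have hPfix : ∀ x ∈ K, P x = x := by
    rintro _ ⟨y, rfl⟩; exact hPP y
  obtain ⟨hdomK, hvalK, hdensedom, hsymm, hmax⟩ := id hThPsa
  -- Part 2: uniqueness of the value
  have part2 : ∀ (u : ThP.domain) (φ : F) (w : h), j φ = (u : h) → w ∈ K →
      (∀ ψ : F, j ψ ∈ K → ⟪φ, ψ⟫_ℂ = ⟪w, j ψ⟫_ℂ) → ThP u = w := by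
    intro u φ w hjφ hwK hform
    obtain ⟨φ₀, hjφ₀, hφ₀K, hform₀⟩ := hThPform u
    have hφφ₀ : φ₀ = φ := hjinj (by rw [hjφ₀, hjφ])
    subst hφφ₀
    have hzero : ∀ ψ : F, j ψ ∈ K → ⟪ThP u - w, j ψ⟫_ℂ = 0 := by
      intro ψ hψ
      rw [inner_sub_left, ← hform₀ ψ hψ, ← hform ψ hψ, sub_self]
    have hvK : ThP u - w ∈ K := sub_mem (hvalK u) hwK
    have hvcl := hdense _ hvK
    have hzero2 : ⟪ThP u - w, ThP u - w⟫_ℂ = 0 := by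
      have hcl : closure (j '' {φ : F | j φ ∈ K}) ⊆
          {y : h | ⟪ThP u - w, y⟫_ℂ = 0} := by
        refine (IsClosed.closure_subset_iff (isClosed_eq ?_ continuous_const)).2 ?_
        · exact Continuous.inner continuous_const continuous_id
        · rintro _ ⟨ψ, hψ, rfl⟩
          exact hzero ψ hψ
      exact hcl hvcl
    exact sub_eq_zero.mp (inner_self_eq_zero.mp hzero2)
  -- Part 1: description of the domain
  have part1 : ∀ x : h, x ∈ ThP.domain ↔ (x ∈ K ∧ ∃ φ : F, j φ = x ∧
      ∃ w ∈ K, ∀ ψ : F, j ψ ∈ K → ⟪φ, ψ⟫_ℂ = ⟪w, j ψ⟫_ℂ) := by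
    intro x
    constructor
    · intro hx
      refine ⟨hdomK hx, ?_⟩
      obtain ⟨φ, hjφ, hφK, hform⟩ := hThPform ⟨x, hx⟩
      exact ⟨φ, hjφ, ThP ⟨x, hx⟩, hvalK _, hform⟩
    · rintro ⟨hxK, φ, hjφ, w, hwK, hform⟩
      have key : ∀ φ' : ThP.domain, ⟪x, ThP φ'⟫_ℂ = ⟪w, (φ' : h)⟫_ℂ := by
        intro φ'
        obtain ⟨φ'', hjφ'', hφ''K, hform''⟩ := hThPform φ'
        have e1 : ⟪φ'', φ⟫_ℂ = ⟪ThP φ', j φ⟫_ℂ :=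
          hform'' φ (by rw [hjφ]; exact hxK)
        have e2 : ⟪φ, φ''⟫_ℂ = ⟪w, j φ''⟫_ℂ := hform φ'' hφ''K
        calc ⟪x, ThP φ'⟫_ℂ = starRingEnd ℂ ⟪ThP φ', x⟫_ℂ := (inner_conj_symm _ _).symm
          _ = starRingEnd ℂ ⟪φ'', φ⟫_ℂ := by rw [e1, hjφ]
          _ = ⟪φ, φ''⟫_ℂ := inner_conj_symm _ _
          _ = ⟪w, j φ''⟫_ℂ := e2
          _ = ⟪w, (φ' : h)⟫_ℂ := by rw [hjφ'']
      exact (hmax x hxK w hwK key).choose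
  -- the compression: value formula
  have hCval : ∀ u : (compression P Θ).domain,
      compression P Θ u = P (Θ ⟨(u : h), u.2.1⟩) := fun u => rfl
  -- dom C ⊆ dom ThP, always
  have claimB : ∀ x : h, x ∈ (compression P Θ).domain → x ∈ ThP.domain := by
    intro x hx
    obtain ⟨φ, hjφ, w0, hform0⟩ := (hΘdom x).mp hx.1
    have hform : ∀ ψ : F, ⟪φ, ψ⟫_ℂ = ⟪Θ ⟨x, hx.1⟩, j ψ⟫_ℂ := hΘval ⟨x, hx.1⟩ φ hjφ
    refine (part1 x).mpr ⟨hx.2, φ, hjφ, P (Θ ⟨x, hx.1⟩), ⟨_, rfl⟩, ?_⟩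
    intro ψ hψ
    rw [hform ψ]
    calc ⟪Θ ⟨x, hx.1⟩, j ψ⟫_ℂ = ⟪Θ ⟨x, hx.1⟩, P (j ψ)⟫_ℂ := by rw [hPfix _ hψ]
      _ = ⟪P (Θ ⟨x, hx.1⟩), j ψ⟫_ℂ := (hPsym _ _).symm
  -- on dom C, ThP agrees with C
  have hCeqThPval : ∀ (u : (compression P Θ).domain) (hu : (u : h) ∈ ThP.domain),
      ThP ⟨(u : h), hu⟩ = compression P Θ u := by
    intro u hu
    obtain ⟨φ, hjφ, w0, -⟩ := (hΘdom u).mp u.2.1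
    refine part2 ⟨(u : h), hu⟩ φ _ hjφ (by rw [hCval u]; exact ⟨_, rfl⟩) ?_
    intro ψ hψ
    rw [hCval u, hΘval ⟨(u : h), u.2.1⟩ φ hjφ ψ]
    calc ⟪Θ ⟨(u : h), u.2.1⟩, j ψ⟫_ℂ
        = ⟪Θ ⟨(u : h), u.2.1⟩, P (j ψ)⟫_ℂ := by rw [hPfix _ hψ]
      _ = ⟪P (Θ ⟨(u : h), u.2.1⟩), j ψ⟫_ℂ := (hPsym _ _).symm
  -- the two key implications
  have hIff1 : (∀ x ∈ ThP.domain, x ∈ Θ.domain) → compression P Θ = ThP := by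
    intro H
    have hdomeq : (compression P Θ).domain = ThP.domain :=
      le_antisymm claimB (fun x hx => ⟨H x hx, hdomK hx⟩)
    refine LinearPMap.ext hdomeq ?_
    intro x hx hy
    exact (hCeqThPval ⟨x, hx⟩ hy).symm
  have hIff2 : IsSelfAdjointIn K (compression P Θ) → ∀ x ∈ ThP.domain, x ∈ Θ.domain := by
    rintro ⟨-, -, -, -, hmaxC⟩ x hx
    have key : ∀ φ' : (compression P Θ).domain,
        ⟪x, compression P Θ φ'⟫_ℂ = ⟪ThP ⟨x, hx⟩, (φ' : h)⟫_ℂ := by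
      intro φ'
      have hφ'ThP : (φ' : h) ∈ ThP.domain := claimB _ φ'.2
      rw [← hCeqThPval φ' hφ'ThP]
      exact (hsymm ⟨x, hx⟩ ⟨(φ' : h), hφ'ThP⟩).symm
    exact (hmaxC x (hdomK hx) (ThP ⟨x, hx⟩) (hvalK _) key).choose.1
  refine ⟨part1, ?_, ?_, ?_⟩
  · intro u φ w hjφ hwK hform
    exact part2 u φ w hjφ hwK hform
  · constructor
    · exact hIff2
    · intro H
      rw [hIff1 H]
      exact hThPsa
  · constructor
    · intro hsa
      exact hIff1 (hIff2 hsa)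
    · intro hEq
      rw [hEq]
      exact hThPsa

end
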